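/- Fix a with -1 ≤ a < 1 and λ ∈ ℝ. Let 𝔲' = {[[x₁₁,0,0],[x₂₁,x₂₂,0],[x₃₁,-λ(x₂₂-x₃₃),x₃₃]]} ⊂ gl₃(ℝ), π(X) = (1/2)(X+Xᵀ), and A = (1/√(2(1+λ²)))(-λE₂₂ + λE₃₃ - 2E₃₂). Then π(A) is a unit vector (for ⟨X,Y⟩ = tr(XY)) orthogonal to 𝔪' = π(𝔲'), and for the orthonormal basis of 𝔪' given by π of X₁=E₁₁, X₂=(1/√2)(E₂₂+E₃₃), X₃=(1/√(2(1+λ²)))(E₂₂-E₃₃-2λE₃₂), X₄=√2E₂₁, X₅=√2E₃₁, the sum Σᵢ ⟨π([A,Xᵢ]), π(Xᵢ)⟩ equals 2λ/√(2(1+λ²)). In particular, this sum vanishes if and only if λ = 0. -/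

import Mathlib

/-!
Write `s = √(2(1+λ²))` and `A = s⁻¹ M` with `M = -λE₂₂ + λE₃₃ - 2E₃₂`. The vectors `X₁` and `X₂`
commute with `A` and contribute nothing. Since `[M, E₂₁] = -λE₂₁ - 2E₃₁` and `[M, E₃₁] = λE₃₁`,
the terms of `X₄` and `X₅` are `-λ/s` and `λ/s` and cancel. Finally
`[M, E₂₂ - E₃₃ - 2λE₃₂] = -4(1+λ²)E₃₂`, so `X₃` contributes `4λ(1+λ²)/s³ = 2λ/s`.
-/

open Matrix

noncomputable section

/-- Projection onto symmetric matrices, `dπ_e`. -/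
def piSym (X : Matrix (Fin 3) (Fin 3) ℝ) : Matrix (Fin 3) (Fin 3) ℝ :=
  (1/2 : ℝ) • (X + Xᵀ)

/-- Trace inner product on matrices. -/
def ip (X Y : Matrix (Fin 3) (Fin 3) ℝ) : ℝ := (X * Y).trace

/-- A = (1/√(2(1+λ²)))(-λE₂₂ + λE₃₃ - 2E₃₂). -/
def A19 (l : ℝ) : Matrix (Fin 3) (Fin 3) ℝ :=
  (Real.sqrt (2 * (1 + l^2)))⁻¹ • !![0,0,0; 0,-l,0; 0,-2,l]

/-- X₁ = E₁₁, X₂ = (1/√2)(E₂₂+E₃₃), X₃ = (1/√(2(1+λ²)))(E₂₂-E₃₃-2λE₃₂),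
    X₄ = √2 E₂₁, X₅ = √2 E₃₁. -/
def X19 (l : ℝ) : Fin 5 → Matrix (Fin 3) (Fin 3) ℝ :=
  ![!![1,0,0; 0,0,0; 0,0,0],
    (Real.sqrt 2)⁻¹ • !![0,0,0; 0,1,0; 0,0,1],
    (Real.sqrt (2 * (1 + l^2)))⁻¹ • !![0,0,0; 0,1,0; 0,-(2*l),-1],
    Real.sqrt 2 • !![0,0,0; 1,0,0; 0,0,0],
    Real.sqrt 2 • !![0,0,0; 0,0,0; 1,0,0]]

lemma piSym_of (a b c d e f g h i : ℝ) :
    piSym !![a, b, c; d, e, f; g, h, i] =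
      !![a, (b + d) / 2, (c + g) / 2; (b + d) / 2, e, (f + h) / 2; (c + g) / 2, (f + h) / 2, i] := by
  ext x y
  fin_cases x <;> fin_cases y <;> simp [piSym] <;> ring

lemma piSym_smul (c : ℝ) (M : Matrix (Fin 3) (Fin 3) ℝ) : piSym (c • M) = c • piSym M := by
  simp only [piSym, transpose_smul, ← smul_add, smul_comm c]

lemma piSym_sub (M N : Matrix (Fin 3) (Fin 3) ℝ) : piSym (M - N) = piSym M - piSym N := by
  simp only [piSym, transpose_sub]
  module

lemma piSym_zero : piSym 0 = 0 := by simp [piSym]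

lemma ip_smul_left (c : ℝ) (M N : Matrix (Fin 3) (Fin 3) ℝ) : ip (c • M) N = c * ip M N := by
  simp [ip]

lemma ip_smul_right (c : ℝ) (M N : Matrix (Fin 3) (Fin 3) ℝ) : ip M (c • N) = c * ip M N := by
  simp [ip]

lemma ip_sub_left (M N P : Matrix (Fin 3) (Fin 3) ℝ) : ip (M - N) P = ip M P - ip N P := by
  simp [ip, sub_mul]

lemma ip_zero_left (M : Matrix (Fin 3) (Fin 3) ℝ) : ip 0 M = 0 := by simp [ip]

lemma ip_of (a b c d e f g h i a' b' c' d' e' f' g' h' i' : ℝ) :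
    ip !![a, b, c; d, e, f; g, h, i] !![a', b', c'; d', e', f'; g', h', i'] =
      a * a' + b * d' + c * g' + d * b' + e * e' + f * h' + g * c' + h * f' + i * i' := by
  rw [ip, mul_fin_three, trace_fin_three_of]
  ring

def curvatureTerm (A X : Matrix (Fin 3) (Fin 3) ℝ) : ℝ := ip (piSym (A * X - X * A)) (piSym X)

lemma curvatureTerm_smul_smul (c d : ℝ) (A X : Matrix (Fin 3) (Fin 3) ℝ) :
    curvatureTerm (c • A) (d • X) = c * d ^ 2 * curvatureTerm A X := by
  simp only [curvatureTerm, smul_mul_smul_comm, mul_comm d c, ← smul_sub, piSym_smul,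
    ip_smul_left, ip_smul_right]
  ring

lemma curvatureTerm_of_commute {A X : Matrix (Fin 3) (Fin 3) ℝ} (h : Commute A X) :
    curvatureTerm A X = 0 := by
  rw [curvatureTerm, h.eq, sub_self, piSym_zero, ip_zero_left]

section
variable (l : ℝ)

lemma sq_sqrt_two_mul_one_add_sq : Real.sqrt (2 * (1 + l ^ 2)) ^ 2 = 2 * (1 + l ^ 2) :=
  Real.sq_sqrt (by positivity)

lemma ip_piSym_A19_self : ip (piSym (A19 l)) (piSym (A19 l)) = 1 := by
  have hs := sq_sqrt_two_mul_one_add_sq l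
  rw [A19, piSym_smul, ip_smul_left, ip_smul_right, piSym_of, ip_of]
  field_simp
  linarith

lemma ip_piSym_A19_piSym_eq_zero (x₁₁ x₂₁ x₂₂ x₃₁ x₃₃ : ℝ) :
    ip (piSym (A19 l)) (piSym !![x₁₁, 0, 0; x₂₁, x₂₂, 0; x₃₁, -l * (x₂₂ - x₃₃), x₃₃]) = 0 := by
  rw [A19, piSym_smul, ip_smul_left, piSym_of, piSym_of, ip_of]
  ring

lemma ip_piSym_X19 (i j : Fin 5) :
    ip (piSym (X19 l i)) (piSym (X19 l j)) = if i = j then 1 else 0 := by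
  have hs := sq_sqrt_two_mul_one_add_sq l
  have ht : Real.sqrt 2 ^ 2 = 2 := Real.sq_sqrt zero_le_two
  have hs₀ : Real.sqrt (2 * (1 + l ^ 2)) ≠ 0 := by positivity
  have ht₀ : Real.sqrt 2 ≠ 0 := by positivity
  unfold X19
  generalize Real.sqrt (2 * (1 + l ^ 2)) = s at *
  generalize Real.sqrt 2 = t at *
  fin_cases i <;> fin_cases j <;> simp [piSym_of, ip_of] <;> field_simp <;> linarith

lemma curvatureTerm_A19_X19_zero : curvatureTerm (A19 l) (X19 l 0) = 0 := by
  refine curvatureTerm_of_commute (Commute.smul_left ?_ _)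
  simp only [X19, cons_val_zero, Commute, SemiconjBy, mul_fin_three]
  simp

lemma curvatureTerm_A19_X19_one : curvatureTerm (A19 l) (X19 l 1) = 0 := by
  refine curvatureTerm_of_commute ((Commute.smul_right ?_ _).smul_left _)
  simp only [Commute, SemiconjBy, mul_fin_three]
  simp

lemma curvatureTerm_A19_X19_two :
    curvatureTerm (A19 l) (X19 l 2) = 2 * l / Real.sqrt (2 * (1 + l ^ 2)) := by
  have hs₀ : Real.sqrt (2 * (1 + l ^ 2)) ≠ 0 := by positivity
  have h : curvatureTerm !![0, 0, 0; 0, -l, 0; 0, -2, l] !![0, 0, 0; 0, 1, 0; 0, -(2 * l), -1] =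
      2 * l * Real.sqrt (2 * (1 + l ^ 2)) ^ 2 := by
    rw [sq_sqrt_two_mul_one_add_sq]
    simp only [curvatureTerm, mul_fin_three, piSym_sub, ip_sub_left, piSym_of, ip_of]
    ring
  simp only [A19, X19, cons_val, curvatureTerm_smul_smul, h]
  field_simp

lemma curvatureTerm_A19_X19_three :
    curvatureTerm (A19 l) (X19 l 3) = -l / Real.sqrt (2 * (1 + l ^ 2)) := by
  have ht : Real.sqrt 2 ^ 2 = 2 := Real.sq_sqrt zero_le_two
  simp only [A19, X19, cons_val, curvatureTerm_smul_smul]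
  simp only [curvatureTerm, mul_fin_three, piSym_sub, ip_sub_left, piSym_of, ip_of, ht]
  field_simp
  ring

lemma curvatureTerm_A19_X19_four :
    curvatureTerm (A19 l) (X19 l 4) = l / Real.sqrt (2 * (1 + l ^ 2)) := by
  have ht : Real.sqrt 2 ^ 2 = 2 := Real.sq_sqrt zero_le_two
  simp only [A19, X19, cons_val, curvatureTerm_smul_smul]
  simp only [curvatureTerm, mul_fin_three, piSym_sub, ip_sub_left, piSym_of, ip_of, ht]
  field_simp
  ring

lemma sum_curvatureTerm_A19_X19 :
    ∑ i, curvatureTerm (A19 l) (X19 l i) = 2 * l / Real.sqrt (2 * (1 + l ^ 2)) := by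
  rw [Fin.sum_univ_five, curvatureTerm_A19_X19_zero, curvatureTerm_A19_X19_one,
    curvatureTerm_A19_X19_two, curvatureTerm_A19_X19_three, curvatureTerm_A19_X19_four]
  ring

lemma sum_curvatureTerm_A19_X19_eq_zero_iff :
    ∑ i, curvatureTerm (A19 l) (X19 l i) = 0 ↔ l = 0 := by
  have hs₀ : Real.sqrt (2 * (1 + l ^ 2)) ≠ 0 := by positivity
  rw [sum_curvatureTerm_A19_X19, div_eq_zero_iff, or_iff_left hs₀, mul_eq_zero,
    or_iff_right two_ne_zero]

end

theorem mean_curvature_r3a_general (l : ℝ) :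
    ip (piSym (A19 l)) (piSym (A19 l)) = 1 ∧
    (∀ X : Matrix (Fin 3) (Fin 3) ℝ,
      (∃ x11 x21 x22 x31 x33 : ℝ,
        X = !![x11,0,0; x21,x22,0; x31, -l * (x22 - x33), x33]) →
      ip (piSym (A19 l)) (piSym X) = 0) ∧
    (∀ i j : Fin 5,
      ip (piSym (X19 l i)) (piSym (X19 l j)) = if i = j then 1 else 0) ∧
    (∑ i : Fin 5,
        ip (piSym (A19 l * X19 l i - X19 l i * A19 l)) (piSym (X19 l i))
      = 2 * l / Real.sqrt (2 * (1 + l^2))) ∧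
    ((∑ i : Fin 5,
        ip (piSym (A19 l * X19 l i - X19 l i * A19 l)) (piSym (X19 l i)) = 0)
      ↔ l = 0) := by
  refine ⟨ip_piSym_A19_self l, ?_, ip_piSym_X19 l, sum_curvatureTerm_A19_X19 l,
    sum_curvatureTerm_A19_X19_eq_zero_iff l⟩
  rintro X ⟨x₁₁, x₂₁, x₂₂, x₃₁, x₃₃, rfl⟩
  exact ip_piSym_A19_piSym_eq_zero l x₁₁ x₂₁ x₂₂ x₃₁ x₃₃

/-- Mean-curvature computation for the orbit with parameter λ for 𝔤 = 𝔯_{3,a}: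
    minimal iff λ = 0. -/
theorem mean_curvature_r3a (a l : ℝ) (ha₁ : -1 ≤ a) (ha₂ : a < 1) :
    ip (piSym (A19 l)) (piSym (A19 l)) = 1 ∧
    (∀ X : Matrix (Fin 3) (Fin 3) ℝ,
      (∃ x11 x21 x22 x31 x33 : ℝ,
        X = !![x11,0,0; x21,x22,0; x31, -l * (x22 - x33), x33]) →
      ip (piSym (A19 l)) (piSym X) = 0) ∧
    (∀ i j : Fin 5,
      ip (piSym (X19 l i)) (piSym (X19 l j)) = if i = j then 1 else 0) ∧
    (∑ i : Fin 5,
        ip (piSym (A19 l * X19 l i - X19 l i * A19 l)) (piSym (X19 l i))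
      = 2 * l / Real.sqrt (2 * (1 + l^2))) ∧
    ((∑ i : Fin 5,
        ip (piSym (A19 l * X19 l i - X19 l i * A19 l)) (piSym (X19 l i)) = 0)
      ↔ l = 0) :=
  mean_curvature_r3a_general l
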